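/- Occurrence frequency is not antimonotone: there exist a data tree T and patterns P' and P such that there is an embedding of P' into P mapping the root of P' to the root of P (so P' is a root-preserving embedded subpattern of P), yet the number of embeddings of P into T strictly exceeds the number of embeddings of P' into T. -/
import Mathlib


/-!
Common formalization of rooted labeled trees / tree patterns, following the
paper "Discovering Closed and Maximal Embedded Patterns from Large Tree Data".

A rooted labeled tree (and likewise a tree pattern, whose edges are read as
descendant edges) is modeled as an `OTree L`: a root label together with a
list of child subtrees.  A *node* of such a tree is addressed by its path
from the root, i.e. a list of child indices (`List ℕ`); the root is `[]`.
With this encoding, `u` is an ancestor of `v` iff `u` is a prefix of `v`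
(`u <+: v`), and the children of a node `p` are the paths `p ++ [i]`.
-/

namespace TreeMining

inductive OTree (L : Type) : Type where
  | node : L → List (OTree L) → OTree L

namespace OTree

variable {L : Type}

/-- `isNode t p` : the path `p` addresses a node of `t`. -/
def isNode : OTree L → List ℕ → Prop
  | _, [] => True
  | node _ cs, i :: p => ∃ h : i < cs.length, isNode (cs.get ⟨i, h⟩) p

/-- The label of the node addressed by `p` (junk value if `p` is not a node). -/
def labelAt : OTree L → List ℕ → L
  | node a _, [] => a
  | node a cs, i :: p => labelAt (cs.getD i (node a [])) p

/-- `u` is an ancestor (or equal) of `v`. -/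
def Anc (u v : List ℕ) : Prop := u <+: v

/-- `u` is a proper ancestor of `v` (equivalently, `v` is a proper descendant of `u`). -/
def ProperAnc (u v : List ℕ) : Prop := u <+: v ∧ u ≠ v

/-- `u` and `v` are incomparable (not on the same root-to-leaf path). -/
def Incomp (u v : List ℕ) : Prop := ¬ u <+: v ∧ ¬ v <+: u

/-- An embedding of a pattern `P` into a tree `T`:  an injective, label preserving
map on nodes sending each edge to a proper ancestor/descendant pair and satisfying
the sibling constraint. -/
structure IsEmb (P T : OTree L) (e : List ℕ → List ℕ) : Prop where
  maps_node : ∀ p, isNode P p → isNode T (e p)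
  injOn : ∀ p q, isNode P p → isNode P q → e p = e q → p = q
  label_eq : ∀ p, isNode P p → labelAt T (e p) = labelAt P p
  edge_desc : ∀ p i, isNode P (p ++ [i]) → ProperAnc (e p) (e (p ++ [i]))
  sibling : ∀ p i j, isNode P (p ++ [i]) → isNode P (p ++ [j]) → i ≠ j →
      Incomp (e (p ++ [i])) (e (p ++ [j]))

/-- An isomorphism from a pattern `P'` into a pattern (or tree) `P`: an injective,
label preserving map on nodes such that `(x, y)` is an edge of `P'` iff
`(m x, m y)` is an edge of `P`. -/
structure IsIso (P' P : OTree L) (m : List ℕ → List ℕ) : Prop where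
  maps_node : ∀ p, isNode P' p → isNode P (m p)
  injOn : ∀ p q, isNode P' p → isNode P' q → m p = m q → p = q
  label_eq : ∀ p, isNode P' p → labelAt P (m p) = labelAt P' p
  edge_iff : ∀ p q, isNode P' p → isNode P' q →
      ((∃ i, q = p ++ [i]) ↔ (∃ i, m q = m p ++ [i]))

/-- `P'` is an embedded subpattern of `P`  (`P' ⊑_e P`). -/
def EmbSub (P' P : OTree L) : Prop := ∃ e, IsEmb P' P e

/-- `P'` is an isomorphic subpattern of `P`  (`P' ⊑_i P`). -/
def IsoSub (P' P : OTree L) : Prop := ∃ m, IsIso P' P m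

/-- `L_root(P)` on `T` : images of the root of `P` under all embeddings of `P` into `T`. -/
def Lroot (P T : OTree L) : Set (List ℕ) := {t | ∃ e, IsEmb P T e ∧ e [] = t}

/-- Root frequency of `P` on `T`. -/
noncomputable def rootFreq (P T : OTree L) : ℕ := (Lroot P T).ncard

/-- `P` is frequent on `T` w.r.t. the threshold `minsup`. -/
def Frequent (T : OTree L) (minsup : ℕ) (P : OTree L) : Prop := minsup ≤ rootFreq P T

/-- `L_root(P|P')` on `T` : the set of nodes `e' (m (root P))` over all embeddings
`m` of `P` into `P'` and `e'` of `P'` into `T`. -/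
def LrootCond (P P' T : OTree L) : Set (List ℕ) :=
  {t | ∃ m e', IsEmb P P' m ∧ IsEmb P' T e' ∧ e' (m []) = t}

/-- The set of nodes of a tree. -/
def nodeSet (t : OTree L) : Set (List ℕ) := {p | isNode t p}

/-- The size (number of nodes) of a tree. -/
noncomputable def size (t : OTree L) : ℕ := (nodeSet t).ncard

/-- A frequent pattern `P` is closed iff there is no proper embedded superpattern `P'`
such that every embedding of `P` into `T` extends, on the image of the root,
to an embedding of `P'` into `T`. -/
def Closed (T : OTree L) (minsup : ℕ) (P : OTree L) : Prop :=
  Frequent T minsup P ∧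
  ¬ ∃ P' : OTree L, EmbSub P P' ∧ size P < size P' ∧
      ∀ e, IsEmb P T e → ∃ m e', IsEmb P P' m ∧ IsEmb P' T e' ∧ e [] = e' (m [])

/-- A frequent pattern is maximal iff no proper embedded superpattern is frequent. -/
def MaximalPat (T : OTree L) (minsup : ℕ) (P : OTree L) : Prop :=
  Frequent T minsup P ∧
  ¬ ∃ P' : OTree L, EmbSub P P' ∧ size P < size P' ∧ Frequent T minsup P'

/-- Attach a new leaf labeled `x` as the new last child of the node addressed by `p`. -/
def attachPath : OTree L → List ℕ → L → OTree L
  | node a cs, [], x => node a (cs ++ [node x []])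
  | node a cs, i :: p, x => node a (cs.set i (attachPath (cs.getD i (node a [])) p x))

/-- Number of children of the node addressed by `p`. -/
def childCount : OTree L → List ℕ → ℕ
  | node _ cs, [] => cs.length
  | node a cs, i :: p => childCount (cs.getD i (node a [])) p

/-- The path `p` lies on the rightmost path of the tree. -/
def onRmp : OTree L → List ℕ → Prop
  | _, [] => True
  | node _ cs, i :: p => ∃ h : i < cs.length, i + 1 = cs.length ∧ onRmp (cs.get ⟨i, h⟩) p

/-- The subtree rooted at the node addressed by `p`. -/
def subtreeAt : OTree L → List ℕ → OTree L
  | t, [] => t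
  | node a cs, i :: p => subtreeAt (cs.getD i (node a [])) p

/-- Child join `P_x^i ⊗_c P_y^i` where `px` is the path of the position `i`:
first attach `x` at `px`, then attach `y` as child of the new node `x`. -/
def childJoin (P : OTree L) (px : List ℕ) (x y : L) : OTree L :=
  attachPath (attachPath P px x) (px ++ [childCount P px]) y

/-- Cousin join `P_x^i ⊗_s P_y^j` where `px`, `py` are the paths of positions `i`, `j`
(`py` a prefix of `px`): attach `x` at `px`, then `y` at `py`. -/
def cousinJoin (P : OTree L) (px py : List ℕ) (x y : L) : OTree L :=
  attachPath (attachPath P px x) py y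

mutual
/-- The strict linear order on tree-pattern representations induced by a
linear order on labels:  smaller root label, or equal root labels and the
child list of the second is a proper prefix of that of the first, or at the
first differing position the child of the first is smaller. -/
inductive PLt {L : Type} [LT L] : OTree L → OTree L → Prop where
  | label : ∀ {a b : L} {cs ds : List (OTree L)}, a < b → PLt (node a cs) (node b ds)
  | children : ∀ {a : L} {cs ds : List (OTree L)}, CLt cs ds → PLt (node a cs) (node a ds)

inductive CLt {L : Type} [LT L] : List (OTree L) → List (OTree L) → Prop where
  | prefixLt : ∀ {c : OTree L} {cs : List (OTree L)}, CLt (c :: cs) []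
  | headLt : ∀ {c d : OTree L} {cs ds : List (OTree L)}, PLt c d → CLt (c :: cs) (d :: ds)
  | headEq : ∀ {c : OTree L} {cs ds : List (OTree L)}, CLt cs ds → CLt (c :: cs) (c :: ds)
end

/-- The order `≤` on tree-pattern representations. -/
def PLe [LT L] (s t : OTree L) : Prop := PLt s t ∨ s = t

/-- A pattern is in canonical form: at every node the child subtrees are sorted. -/
def Canonical [LT L] (t : OTree L) : Prop :=
  ∀ p i, isNode t (p ++ [i + 1]) →
    PLe (subtreeAt t (p ++ [i])) (subtreeAt t (p ++ [i + 1]))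

/-- Occurrence equivalence of `S` and its embedded superpattern `S'` w.r.t. the data
tree `T`: every embedding of `S` into `T` extends to an embedding of `S'` into `T`. -/
def OccEquiv (T S S' : OTree L) : Prop :=
  ∀ e, IsEmb S T e → ∃ m e', IsEmb S S' m ∧ IsEmb S' T e' ∧
    ∀ p, isNode S p → e p = e' (m p)

/-- `attachPath P p x` is a member of the equivalence class `[P]` (w.r.t. `T`, `minsup`):
`p` is a node on the rightmost path of `P` (so the new node is the rightmost leaf)
and the resulting pattern is frequent. -/
def InClass (T : OTree L) (minsup : ℕ) (P : OTree L) (p : List ℕ) (x : L) : Prop :=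
  onRmp P p ∧ Frequent T minsup (attachPath P p x)

/-- `P_x^i` is a child surrogate of `P_y^i` (both attached at the path `px`). -/
def IsChildSurrogate [LT L] (T : OTree L) (minsup : ℕ) (P : OTree L)
    (px : List ℕ) (x y : L) : Prop :=
  InClass T minsup P px x ∧ InClass T minsup P px y ∧
  attachPath P px x ≠ attachPath P px y ∧
  PLt (attachPath P px x) (attachPath P px y) ∧
  -- (a)  P_y^i ≡ P_x^i ⊗_c P_y^i
  OccEquiv T (attachPath P px y) (childJoin P px x y) ∧
  -- (b)  for every P_z^i ∈ [P] with P_y^i ≤ P_z^i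
  ∀ z : L, InClass T minsup P px z →
    PLe (attachPath P px y) (attachPath P px z) →
    (OccEquiv T (cousinJoin P px px y z)
        (attachPath (childJoin P px x y) (px ++ [childCount P px]) z) ∨
     OccEquiv T (cousinJoin P px px y z)
        (attachPath (childJoin P px x y) px z))

/-- `P_x^i` is a cousin surrogate of `P_y^j` (attached at paths `px`, `py`; `i ≥ j`
corresponds to `py <+: px`). -/
def IsCousinSurrogate [LT L] (T : OTree L) (minsup : ℕ) (P : OTree L)
    (px py : List ℕ) (x y : L) : Prop :=
  InClass T minsup P px x ∧ InClass T minsup P py y ∧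
  py <+: px ∧
  attachPath P px x ≠ attachPath P py y ∧
  PLt (attachPath P px x) (attachPath P py y) ∧
  -- (a)  P_y^j ≡ P_x^i ⊗_s P_y^j
  OccEquiv T (attachPath P py y) (cousinJoin P px py x y) ∧
  -- (b)  for every P_z^k ∈ [P] with k ≤ j (join defined) and P_y^j ≤ P_z^k
  ∀ (pz : List ℕ) (z : L), InClass T minsup P pz z → pz <+: py →
    PLe (attachPath P py y) (attachPath P pz z) →
    OccEquiv T (cousinJoin P py pz y z)
      (attachPath (cousinJoin P px py x y) pz z)

/-- One (canonical) child or cousin expansion step in the pattern search tree. -/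
inductive Step {L : Type} [LT L] (T : OTree L) (minsup : ℕ) : OTree L → OTree L → Prop where
  | child : ∀ (R : OTree L) (p : List ℕ) (a z : L),
      InClass T minsup R p a → InClass T minsup R p z →
      Canonical (childJoin R p a z) → Frequent T minsup (childJoin R p a z) →
      Step T minsup (attachPath R p a) (childJoin R p a z)
  | cousin : ∀ (R : OTree L) (p q : List ℕ) (a z : L),
      InClass T minsup R p a → InClass T minsup R q z → q <+: p →
      Canonical (cousinJoin R p q a z) → Frequent T minsup (cousinJoin R p q a z) →
      Step T minsup (attachPath R p a) (cousinJoin R p q a z)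

/-- Projection `Π_S(OC(R))` of the occurrence relation of `R` on `T` onto the nodes of
`S`, along a correspondence `ρ` from nodes of `S` to nodes of `R`
(each projected occurrence is represented by all functions agreeing with it on the
nodes of `S`). -/
def OCprojVia (T R S : OTree L) (ρ : List ℕ → List ℕ) : Set (List ℕ → List ℕ) :=
  {f | ∃ e, IsEmb R T e ∧ ∀ p, isNode S p → f p = e (ρ p)}

/-- Projection `Π_S(OC(R))` when `S` is a prefix of `R` (nodes of `S` have the same
paths in `R`). -/
def OCproj (T R S : OTree L) : Set (List ℕ → List ℕ) := OCprojVia T R S id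

/-- Insert a new node labeled `x` as the parent of the node addressed by `p`
(the whole subtree at `p` becomes the unique child of the new node). -/
def insertParent : OTree L → List ℕ → L → OTree L
  | t, [], x => node x [t]
  | node a cs, i :: p, x => node a (cs.set i (insertParent (cs.getD i (node a [])) p x))

/-- Insert a new leaf labeled `x` as the `c`-th child of the node addressed by `p`. -/
def insertChildAt : OTree L → List ℕ → ℕ → L → OTree L
  | node a cs, [], c, x => node a (cs.take c ++ [node x []] ++ cs.drop c)
  | node a cs, i :: p, c, x => node a (cs.set i (insertChildAt (cs.getD i (node a [])) p c x))

end OTree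

end TreeMining

namespace TreeMining
namespace OTree

/-- The occurrence frequency of `P` on `T`: the number of distinct embeddings of `P`
into `T` (each embedding represented canonically by the function sending every
non-node path to `[]`). -/
noncomputable def embCount {L : Type} (P T : OTree L) : ℕ :=
  Set.ncard {f : List ℕ → List ℕ | IsEmb P T f ∧ ∀ p, ¬ isNode P p → f p = []}

section Aux

private lemma isNode_leaf {L : Type} (a : L) (p : List ℕ) :
    isNode (node a []) p ↔ p = [] := by
  cases p with
  | nil => simp [isNode]
  | cons i q =>
    simp only [isNode]
    constructor
    · rintro ⟨h, -⟩; simp at h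
    · intro h; simp at h

private lemma isNode_P (p : List ℕ) :
    isNode (node 0 [node 1 ([] : List (OTree ℕ))]) p ↔ p = [] ∨ p = [0] := by
  cases p with
  | nil => simp [isNode]
  | cons i q =>
    simp only [isNode]
    constructor
    · rintro ⟨h, hq⟩
      have hi : i = 0 := Nat.lt_one_iff.mp (by simpa using h)
      subst hi
      have hq' : isNode (node 1 ([] : List (OTree ℕ))) q := hq
      rw [isNode_leaf] at hq'
      subst hq'; simp
    · rintro (h | h)
      · simp at h
      · simp at h
        obtain ⟨hi, hq⟩ := h
        subst hi; subst hq
        exact ⟨by norm_num, trivial⟩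

private lemma isNode_T (p : List ℕ) :
    isNode (node 0 [node 1 ([] : List (OTree ℕ)), node 1 []]) p ↔
      p = [] ∨ p = [0] ∨ p = [1] := by
  cases p with
  | nil => simp [isNode]
  | cons i q =>
    simp only [isNode]
    constructor
    · rintro ⟨h, hq⟩
      have hi : i < 2 := by simpa using h
      interval_cases i
      · have hq' : isNode (node 1 ([] : List (OTree ℕ))) q := hq
        rw [isNode_leaf] at hq'
        subst hq'; simp
      · have hq' : isNode (node 1 ([] : List (OTree ℕ))) q := hq
        rw [isNode_leaf] at hq'
        subst hq'; simp
    · rintro (h | h | h)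
      · simp at h
      · simp at h
        obtain ⟨hi, hq⟩ := h; subst hi; subst hq
        exact ⟨by norm_num, trivial⟩
      · simp at h
        obtain ⟨hi, hq⟩ := h; subst hi; subst hq
        exact ⟨by norm_num, trivial⟩

private lemma labelAt_T_nil :
    labelAt (node 0 [node 1 ([] : List (OTree ℕ)), node 1 []]) [] = 0 := rfl

private lemma labelAt_T_0 :
    labelAt (node 0 [node 1 ([] : List (OTree ℕ)), node 1 []]) [0] = 1 := rfl

private lemma labelAt_T_1 :
    labelAt (node 0 [node 1 ([] : List (OTree ℕ)), node 1 []]) [1] = 1 := rfl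

end Aux

/-- Occurrence frequency is not antimonotone: there exist a data
tree `T` and patterns `P'`, `P` with a root-preserving embedding of `P'` into `P`,
such that `P` has strictly more embeddings into `T` than `P'` does. -/
theorem occurrence_frequency_not_antimonotone :
    ∃ (T P' P : OTree ℕ) (m : List ℕ → List ℕ),
      IsEmb P' P m ∧ m [] = [] ∧ embCount P' T < embCount P T := by
  set T : OTree ℕ := node 0 [node 1 [], node 1 []] with hT
  set P' : OTree ℕ := node 0 [] with hP'
  set P : OTree ℕ := node 0 [node 1 []] with hP
  refine ⟨T, P', P, id, ?_, rfl, ?_⟩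
  · -- embedding of P' into P via identity
    constructor
    · intro p hp
      rw [isNode_leaf] at hp; subst hp
      rw [isNode_P]; simp
    · intro p q _ _ h; exact h
    · intro p hp
      rw [isNode_leaf] at hp; subst hp; rfl
    · intro p i hpi
      rw [isNode_leaf] at hpi; simp at hpi
    · intro p i j hpi _ _
      rw [isNode_leaf] at hpi; simp at hpi
  · -- counting
    have hset' : {f : List ℕ → List ℕ | IsEmb P' T f ∧ ∀ p, ¬ isNode P' p → f p = []} =
        {fun _ => []} := by
      ext f
      simp only [Set.mem_setOf_eq, Set.mem_singleton_iff]
      constructor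
      · rintro ⟨he, hz⟩
        funext p
        by_cases hp : isNode P' p
        · rw [isNode_leaf] at hp; subst hp
          have h1 : isNode T (f []) := he.maps_node [] (by rw [isNode_leaf])
          have h2 : labelAt T (f []) = 0 := he.label_eq [] (by rw [isNode_leaf])
          rw [isNode_T] at h1
          rcases h1 with h | h | h
          · exact h
          · rw [h, labelAt_T_0] at h2; exact absurd h2 one_ne_zero
          · rw [h, labelAt_T_1] at h2; exact absurd h2 one_ne_zero
        · exact hz p hp
      · rintro rfl
        refine ⟨⟨?_, ?_, ?_, ?_, ?_⟩, fun _ _ => rfl⟩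
        · intro p hp; rw [isNode_T]; simp
        · intro p q hp hq _
          rw [isNode_leaf] at hp hq; rw [hp, hq]
        · intro p hp
          rw [isNode_leaf] at hp; subst hp; rfl
        · intro p i hpi; rw [isNode_leaf] at hpi; simp at hpi
        · intro p i j hpi _ _; rw [isNode_leaf] at hpi; simp at hpi
    have hcard' : embCount P' T = 1 := by
      rw [embCount, hset', Set.ncard_singleton]
    -- the two embeddings of P
    set f0 : List ℕ → List ℕ := fun p => if p = [0] then [0] else [] with hf0
    set f1 : List ℕ → List ℕ := fun p => if p = [0] then [1] else [] with hf1
    have hemb : ∀ k : ℕ, k < 2 →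
        IsEmb P T (fun p => if p = [0] then [k] else []) := by
      intro k hk
      refine ⟨?_, ?_, ?_, ?_, ?_⟩
      · intro p hp
        rw [isNode_P] at hp
        rcases hp with rfl | rfl
        · simp; rw [isNode_T]; simp
        · simp; rw [isNode_T]
          interval_cases k <;> simp
      · intro p q hp hq h
        rw [isNode_P] at hp hq
        rcases hp with rfl | rfl <;> rcases hq with rfl | rfl <;> simp_all
      · intro p hp
        rw [isNode_P] at hp
        rcases hp with rfl | rfl
        · simp; rfl
        · simp
          interval_cases k
          · rw [labelAt_T_0]; rfl
          · rw [labelAt_T_1]; rfl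
      · intro p i hpi
        rw [isNode_P] at hpi
        rcases hpi with h | h
        · simp at h
        · have hp : p = [] ∧ i = 0 := by
            cases p with
            | nil => simp at h; exact ⟨rfl, h⟩
            | cons a q => simp at h
          obtain ⟨rfl, rfl⟩ := hp
          refine ⟨?_, ?_⟩
          · simp
          · simp
      · intro p i j hpi hpj hij
        rw [isNode_P] at hpi hpj
        rcases hpi with h | h
        · simp at h
        · rcases hpj with h' | h'
          · simp at h'
          · exfalso
            have : p ++ [i] = p ++ [j] := h.trans h'.symm
            simp at this; exact hij this
    have hset : {f : List ℕ → List ℕ | IsEmb P T f ∧ ∀ p, ¬ isNode P p → f p = []} =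
        {f0, f1} := by
      ext f
      simp only [Set.mem_setOf_eq, Set.mem_insert_iff, Set.mem_singleton_iff]
      constructor
      · rintro ⟨he, hz⟩
        have hroot : f [] = [] := by
          have h1 : isNode T (f []) := he.maps_node [] (by rw [isNode_P]; simp)
          have h2 : labelAt T (f []) = 0 := he.label_eq [] (by rw [isNode_P]; simp)
          rw [isNode_T] at h1
          rcases h1 with h | h | h
          · exact h
          · rw [h, labelAt_T_0] at h2; exact absurd h2 one_ne_zero
          · rw [h, labelAt_T_1] at h2; exact absurd h2 one_ne_zero
        have hn0 : isNode P [0] := by rw [isNode_P]; simp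
        have h1 : isNode T (f [0]) := he.maps_node [0] hn0
        have h2 : labelAt T (f [0]) = 1 := he.label_eq [0] hn0
        rw [isNode_T] at h1
        rcases h1 with h | h | h
        · rw [h, labelAt_T_nil] at h2; exact absurd h2 zero_ne_one
        · left
          funext p
          by_cases hp : isNode P p
          · rw [isNode_P] at hp
            rcases hp with rfl | rfl
            · simpa [hf0] using hroot
            · simpa [hf0] using h
          · have := hz p hp
            have hpne : p ≠ [0] := fun hc => hp (hc ▸ hn0)
            simp [hf0, hpne, this]
        · right
          funext p
          by_cases hp : isNode P p
          · rw [isNode_P] at hp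
            rcases hp with rfl | rfl
            · simpa [hf1] using hroot
            · simpa [hf1] using h
          · have := hz p hp
            have hpne : p ≠ [0] := fun hc => hp (hc ▸ hn0)
            simp [hf1, hpne, this]
      · rintro (rfl | rfl)
        · refine ⟨hemb 0 (by norm_num), fun p hp => ?_⟩
          have hpne : p ≠ [0] := fun hc => hp (by rw [hc, isNode_P]; simp)
          simp [hf0, hpne]
        · refine ⟨hemb 1 (by norm_num), fun p hp => ?_⟩
          have hpne : p ≠ [0] := fun hc => hp (by rw [hc, isNode_P]; simp)
          simp [hf1, hpne]
    have hne : f0 ≠ f1 := by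
      intro h
      have := congrFun h [0]
      simp [hf0, hf1] at this
    have hcard : embCount P T = 2 := by
      rw [embCount, hset, Set.ncard_pair hne]
    rw [hcard', hcard]
    norm_num

end OTree
end TreeMining
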